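/- arXiv:2212.00396 — 2 statements merged into one kernel-verified Lean document; each statement's English description precedes it below -/
import Mathlib

section
/- Let T : S × Z → S be a continuous map on a compact metric space S (the state space) such that for some fixed 0 ≤ r < 1, dist(T(x,z), T(y,z)) ≤ r · dist(x,y) for all x, y ∈ S and all z ∈ Z. Then for every bi-infinite input sequence z : ℤ → Z there exists a unique sequence x : ℤ → S with x(t) = T(x(t-1), z(t)) for all t ∈ ℤ (the echo state property). -/
/-!
The recursion `x t = T (x (t - 1)) (z t)` says that the whole trajectory `x` is a fixed point of
the map `x ↦ (t ↦ T (x (t - 1)) (z t))` on sequences. Since `S` is compact, hence bounded and complete,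
every sequence is a bounded function on the discrete space `ℤ`, so this map acts on the complete
space `ℤ →ᵇ S` with the uniform metric, where it is a contraction with constant `r`; Banach's fixed point theorem
gives existence and uniqueness.
-/

open BoundedContinuousFunction NNReal Function

namespace BoundedContinuousFunction

variable {α β : Type*} [TopologicalSpace α] [DiscreteTopology α] [PseudoMetricSpace β]
  [BoundedSpace β]

noncomputable def ofBoundedSpace (f : α → β) : α →ᵇ β :=
  mkOfDiscrete f (Metric.diam (Set.univ : Set β)) fun _ _ =>
    Metric.dist_le_diam_of_mem BoundedSpace.bounded_univ trivial trivial

@[simp]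
theorem coe_ofBoundedSpace (f : α → β) : ⇑(ofBoundedSpace f) = f := rfl

end BoundedContinuousFunction

section EchoState

variable {S Z : Type*} [MetricSpace S] [BoundedSpace S]

noncomputable def echoStep (T : S → Z → S) (z : ℤ → Z) (x : ℤ →ᵇ S) : ℤ →ᵇ S :=
  ofBoundedSpace fun t => T (x (t - 1)) (z t)

theorem contractingWith_echoStep {T : S → Z → S} {K : ℝ≥0} (hK : K < 1)
    (hT : ∀ z, LipschitzWith K (T · z)) (z : ℤ → Z) : ContractingWith K (echoStep T z) := by
  refine ⟨hK, LipschitzWith.of_dist_le_mul fun x y => (dist_le (by positivity)).2 fun t => ?_⟩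
  calc dist (T (x (t - 1)) (z t)) (T (y (t - 1)) (z t))
      ≤ K * dist (x (t - 1)) (y (t - 1)) := (hT (z t)).dist_le_mul _ _
    _ ≤ K * dist x y := by gcongr; exact dist_coe_le_dist _

theorem existsUnique_echoState [CompleteSpace S] [Nonempty S] {T : S → Z → S} {K : ℝ≥0}
    (hK : K < 1) (hT : ∀ z, LipschitzWith K (T · z)) (z : ℤ → Z) :
    ∃! x : ℤ → S, ∀ t, x t = T (x (t - 1)) (z t) := by
  have : Nonempty (ℤ →ᵇ S) := ⟨const ℤ (Classical.arbitrary S)⟩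
  have hstep := contractingWith_echoStep hK hT z
  refine ⟨hstep.fixedPoint _, fun t => ?_, fun y hy => ?_⟩
  · exact (DFunLike.congr_fun hstep.fixedPoint_isFixedPt t).symm
  · have hfix : IsFixedPt (echoStep T z) (ofBoundedSpace y) := by
      ext t
      exact (hy t).symm
    exact congrArg (⇑) (hstep.fixedPoint_unique hfix)

end EchoState

theorem stmt_5 {S Z : Type*} [MetricSpace S] [CompactSpace S] [Nonempty S]
    (T : S → Z → S) (r : ℝ) (hr0 : 0 ≤ r) (hr1 : r < 1)
    (hcontr : ∀ (x y : S) (z : Z), dist (T x z) (T y z) ≤ r * dist x y) :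
    ∀ z : ℤ → Z, ∃! x : ℤ → S, ∀ t : ℤ, x t = T (x (t - 1)) (z t) :=
  existsUnique_echoState (K := ⟨r, hr0⟩) hr1 fun z =>
    LipschitzWith.of_dist_le_mul fun x y => hcontr x y z
end

section
/- Let T be a linear map on d×d complex matrices that is trace-preserving and positivity-preserving (maps positive semidefinite to positive semidefinite). Then T maps the set of density matrices into itself, and T has at least one fixed point that is a density matrix. -/
open Matrix ComplexOrder
open Filter Topology Set Pointwise

/-!
The density matrices form a convex set, compact because `‖ρ i j‖² ≤ ρ i i * ρ j j ≤ 1`, which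
`T` maps into itself. For a linear map no Brouwer theorem is needed: the Cesàro averages
`(n + 1)⁻¹ • ∑_{k ≤ n} T^k ρ₀` stay in the set and `T` moves them only by
`(n + 1)⁻¹ • (T^(n+1) ρ₀ - ρ₀) → 0`, so any cluster point of them is a fixed point.
-/

section FixedPoint

variable {E : Type*} [AddCommGroup E] [Module ℝ E]

noncomputable def LinearMap.cesaroMean (T : E →ₗ[ℝ] E) (x : E) (n : ℕ) : E :=
  ((n : ℝ) + 1)⁻¹ • ∑ k ∈ Finset.range (n + 1), (T ^ k) x

namespace LinearMap

variable (T : E →ₗ[ℝ] E)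

theorem cesaroMean_mem {K : Set E} (hK : Convex ℝ K) (hTK : MapsTo T K K) {x : E} (hx : x ∈ K)
    (n : ℕ) : T.cesaroMean x n ∈ K := by
  rw [cesaroMean, Finset.smul_sum]
  refine hK.sum_mem (fun _ _ => by positivity) ?_ fun k _ => ?_
  · rw [Finset.sum_const, Finset.card_range, nsmul_eq_mul]
    push_cast
    exact mul_inv_cancel₀ (by positivity)
  · rw [Module.End.coe_pow]
    exact hTK.iterate k hx

theorem apply_cesaroMean_sub (x : E) (n : ℕ) :
    T (T.cesaroMean x n) - T.cesaroMean x n = ((n : ℝ) + 1)⁻¹ • ((T ^ (n + 1)) x - x) := by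
  rw [cesaroMean, map_smul, map_sum, ← smul_sub, ← Finset.sum_sub_distrib]
  simp_rw [← Module.End.mul_apply, ← pow_succ']
  rw [Finset.sum_range_sub (fun k => (T ^ k) x), pow_zero, Module.End.one_apply]

variable [TopologicalSpace E] [IsTopologicalAddGroup E]

theorem tendsto_apply_cesaroMean_sub {K : Set E} (hK : Bornology.IsVonNBounded ℝ K)
    (hTK : MapsTo T K K) {x : E} (hx : x ∈ K) :
    Tendsto (fun n => T (T.cesaroMean x n) - T.cesaroMean x n) atTop (𝓝 0) := by
  simp_rw [apply_cesaroMean_sub]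
  have hmem : ∀ n : ℕ, (T ^ (n + 1)) x - x ∈ K - K := fun n =>
    sub_mem_sub (by rw [Module.End.coe_pow]; exact hTK.iterate _ hx) hx
  have hε : Tendsto (fun n : ℕ => ((n : ℝ) + 1)⁻¹) atTop (𝓝 0) := by
    simpa only [one_div] using tendsto_one_div_add_atTop_nhds_zero_nat (𝕜 := ℝ)
  exact (hK.sub hK).smul_tendsto_zero (.of_forall hmem) hε

theorem exists_fixedPoint_of_isCompact_of_convex [ContinuousSMul ℝ E] [T2Space E]
    (hT : Continuous T) {K : Set E} (hK : IsCompact K) (hKc : Convex ℝ K) (hne : K.Nonempty)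
    (hTK : MapsTo T K K) :
    ∃ x ∈ K, T x = x := by
  obtain ⟨x₀, hx₀⟩ := hne
  obtain ⟨x, hxK, hclus⟩ := hK.exists_mapClusterPt (f := atTop) (u := T.cesaroMean x₀)
    (tendsto_principal.2 (.of_forall (T.cesaroMean_mem hKc hTK hx₀)))
  have hcl : MapClusterPt (T x - x) atTop
      (fun n => T (T.cesaroMean x₀ n) - T.cesaroMean x₀ n) :=
    hclus.continuousAt_comp (f := fun y => T y - y) (hT.sub continuous_id).continuousAt
  have hlim := T.tendsto_apply_cesaroMean_sub (hK.isVonNBounded ℝ) hTK hx₀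
  exact ⟨x, hxK, sub_eq_zero.1 (eq_of_nhds_neBot (hcl.clusterPt.mono hlim).neBot)⟩

end LinearMap

end FixedPoint

namespace Matrix

theorem PosSemidef.normSq_apply_le {n : Type*} {A : Matrix n n ℂ} (hA : A.PosSemidef) (i j : n) :
    Complex.normSq (A i j) ≤ (A i i).re * (A j j).re := by
  classical
  have hdet := (hA.submatrix ![i, j]).det_nonneg
  simp only [det_fin_two, submatrix_apply, cons_val_zero, cons_val_one, ← hA.1.apply j i] at hdet
  have hi := (Complex.nonneg_iff.1 (hA.diag_nonneg (i := i))).2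
  have := (Complex.nonneg_iff.1 hdet).1
  simp only [Complex.sub_re, Complex.mul_re, ← hi, zero_mul, sub_zero] at this
  simpa [Complex.normSq_apply] using this

variable {n : Type*} [Fintype n]

theorem isClosed_setOf_posSemidef {𝕜 : Type*} [RCLike 𝕜] :
    IsClosed {A : Matrix n n 𝕜 | A.PosSemidef} := by
  simp_rw [posSemidef_iff_dotProduct_mulVec, Set.ofPred_and, Set.ofPred_forall]
  exact (isClosed_eq continuous_id.matrix_conjTranspose continuous_id).inter <|
    isClosed_iInter fun x => isClosed_le continuous_const <|
      continuous_const.dotProduct (continuous_id.matrix_mulVec continuous_const)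

theorem PosSemidef.re_apply_self_le_trace {A : Matrix n n ℂ} (hA : A.PosSemidef) (i : n) :
    (A i i).re ≤ A.trace.re := by
  rw [trace, Complex.re_sum]
  exact Finset.single_le_sum (f := fun k => (A k k).re)
    (fun k _ => (Complex.nonneg_iff.1 hA.diag_nonneg).1) (Finset.mem_univ i)

theorem PosSemidef.norm_apply_le_trace {A : Matrix n n ℂ} (hA : A.PosSemidef) (i j : n) :
    ‖A i j‖ ≤ A.trace.re := by
  have hi := hA.re_apply_self_le_trace i
  have hj := hA.re_apply_self_le_trace j
  have hi0 := (Complex.nonneg_iff.1 (hA.diag_nonneg (i := i))).1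
  have hj0 := (Complex.nonneg_iff.1 (hA.diag_nonneg (i := j))).1
  have hsq : ‖A i j‖ ^ 2 ≤ A.trace.re ^ 2 := by
    rw [← Complex.normSq_eq_norm_sq]
    nlinarith [hA.normSq_apply_le i j]
  exact (sq_le_sq₀ (norm_nonneg _) (hi0.trans hi)).1 hsq

variable (n) in
def densityMatrices : Set (Matrix n n ℂ) := {ρ | ρ.PosSemidef ∧ ρ.trace = 1}

theorem convex_densityMatrices : Convex ℝ (densityMatrices n) := by
  rintro A ⟨hA, hAtr⟩ B ⟨hB, hBtr⟩ a b ha hb hab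
  refine ⟨(hA.smul ha).add (hB.smul hb), ?_⟩
  rw [trace_add, trace_smul, trace_smul, hAtr, hBtr, ← add_smul, hab, one_smul]

theorem isCompact_densityMatrices : IsCompact (densityMatrices n) := by
  have hball :
      IsCompact (univ.pi fun _ : n => univ.pi fun _ : n => Metric.closedBall (0 : ℂ) 1) :=
    isCompact_univ_pi fun _ => isCompact_univ_pi fun _ => isCompact_closedBall 0 1
  refine hball.of_isClosed_subset
    (isClosed_setOf_posSemidef.inter (isClosed_eq continuous_id.matrix_trace continuous_const))
    fun ρ hρ => ?_
  simp only [mem_univ_pi, mem_closedBall_zero_iff]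
  intro i j
  simpa [hρ.2] using hρ.1.norm_apply_le_trace i j

theorem densityMatrices_nonempty [Nonempty n] : (densityMatrices n).Nonempty := by
  classical
  refine ⟨(Fintype.card n : ℝ)⁻¹ • 1, PosSemidef.one.smul (by positivity), ?_⟩
  rw [trace_smul, trace_one]
  simp [Fintype.card_ne_zero]

theorem mapsTo_densityMatrices {f : Matrix n n ℂ → Matrix n n ℂ}
    (hf : ∀ A, (f A).trace = A.trace)
    (hpos : ∀ A : Matrix n n ℂ, A.PosSemidef → (f A).PosSemidef) :
    MapsTo f (densityMatrices n) (densityMatrices n) :=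
  fun ρ hρ => ⟨hpos ρ hρ.1, (hf ρ).trans hρ.2⟩

end Matrix

theorem stmt_12 {d : ℕ} (hd : 0 < d)
    (T : Matrix (Fin d) (Fin d) ℂ →ₗ[ℂ] Matrix (Fin d) (Fin d) ℂ)
    (hT : ∀ A, (T A).trace = A.trace)
    (hpos : ∀ A : Matrix (Fin d) (Fin d) ℂ, A.PosSemidef → (T A).PosSemidef) :
    (∀ ρ : Matrix (Fin d) (Fin d) ℂ, ρ.PosSemidef → ρ.trace = 1 →
        (T ρ).PosSemidef ∧ (T ρ).trace = 1) ∧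
    (∃ ρ : Matrix (Fin d) (Fin d) ℂ, ρ.PosSemidef ∧ ρ.trace = 1 ∧ T ρ = ρ) := by
  have hmaps := mapsTo_densityMatrices hT hpos
  refine ⟨fun ρ hρ htr => hmaps ⟨hρ, htr⟩, ?_⟩
  have : Nonempty (Fin d) := ⟨⟨0, hd⟩⟩
  obtain ⟨ρ, ⟨hρ, htr⟩, hfix⟩ :=
    (T.restrictScalars ℝ).exists_fixedPoint_of_isCompact_of_convex
      T.continuous_of_finiteDimensional isCompact_densityMatrices convex_densityMatrices
      densityMatrices_nonempty hmaps
  exact ⟨ρ, hρ, htr, hfix⟩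
end
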